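/- arXiv:1704.03486 — 5 statements merged into one kernel-verified Lean document; each statement's English description precedes it below -/
import Mathlib

section
/- For any matrix M ∈ ℂ^{n×n}, per(M) = (1/n!) · 1_{Sₙ}† M^{⊗n} 1_{Sₙ}, where 1_{Sₙ} ∈ ℂ^{nⁿ} is the indicator vector of permutations: its coordinate indexed by σ ∈ [n]^[n] is 1 if σ is a permutation of [n], and 0 otherwise. -/
open scoped Matrix

noncomputable def perm {n : ℕ} (M : Matrix (Fin n) (Fin n) ℂ) : ℂ :=
  ∑ σ : Equiv.Perm (Fin n), ∏ i, M i (σ i)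

/-! The indicator vectors cut the double sum over `[n]^[n] × [n]^[n]` down to pairs of
permutations `(σ, τ)`. Reindexing rows by `σ` shows that the inner sum over `τ` is `per(M)` for
every `σ`, so the outer sum contributes the factor `n!`. -/

open Finset

section BijectiveIndicator

variable {α R : Type*} [Fintype α] [DecidableEq α]

theorem sum_ite_bijective [AddCommMonoid R] (g : (α → α) → R) :
    ∑ f : α → α, (if Function.Bijective f then g f else 0) = ∑ σ : Equiv.Perm α, g σ := by
  rw [← sum_filter]
  refine (sum_bij (fun (σ : Equiv.Perm α) _ => (σ : α → α)) (fun σ _ => by simp)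
    (fun _ _ _ _ h => Equiv.ext (congrFun h)) (fun f hf => ?_) (fun _ _ => rfl)).symm
  exact ⟨Equiv.ofBijective f (by simpa using hf), mem_univ _, rfl⟩

theorem sum_sum_indicator_bijective_mul [NonAssocSemiring R] (g : (α → α) → (α → α) → R) :
    ∑ σ : α → α, ∑ τ : α → α,
        (if Function.Bijective σ then (1 : R) else 0) * g σ τ *
          (if Function.Bijective τ then (1 : R) else 0) =
      ∑ σ : Equiv.Perm α, ∑ τ : Equiv.Perm α, g σ τ := by
  rw [← sum_ite_bijective (fun σ => ∑ τ : Equiv.Perm α, g σ τ)]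
  refine sum_congr rfl fun σ _ => ?_
  by_cases hσ : Function.Bijective σ <;>
    simp only [hσ, if_true, if_false, one_mul, zero_mul, mul_ite, mul_one, mul_zero,
      sum_const_zero, sum_ite_bijective]

end BijectiveIndicator

-- Mathlib's `permanent` runs `σ` over rows, `perm` over columns: they agree via the transpose.
theorem perm_eq_permanent {n : ℕ} (M : Matrix (Fin n) (Fin n) ℂ) : perm M = M.permanent :=
  M.permanent_transpose

theorem perm_submatrix_perm_id {n : ℕ} (M : Matrix (Fin n) (Fin n) ℂ) (σ : Equiv.Perm (Fin n)) :
    perm (M.submatrix σ id) = perm M := by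
  simp only [perm_eq_permanent, Matrix.permanent_permute_cols]

theorem perm_eq_tensor_form (n : ℕ) (M : Matrix (Fin n) (Fin n) ℂ) :
    perm M = (1 / n.factorial : ℂ) *
      ∑ σ : Fin n → Fin n, ∑ τ : Fin n → Fin n,
        (starRingEnd ℂ) (if Function.Bijective σ then (1 : ℂ) else 0) *
          (∏ i, M (σ i) (τ i)) *
          (if Function.Bijective τ then (1 : ℂ) else 0) := by
  simp only [apply_ite (starRingEnd ℂ), map_one, map_zero]
  rw [sum_sum_indicator_bijective_mul (fun σ τ => ∏ i, M (σ i) (τ i))]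
  have inner_sum_eq_perm (σ : Equiv.Perm (Fin n)) :
      ∑ τ : Equiv.Perm (Fin n), ∏ i, M (σ i) (τ i) = perm M :=
    perm_submatrix_perm_id M σ
  simp only [inner_sum_eq_perm, sum_const, card_univ, Fintype.card_perm, Fintype.card_fin, nsmul_eq_mul]
  rw [one_div, inv_mul_cancel_left₀ (Nat.cast_ne_zero.mpr n.factorial_ne_zero)]
end

section
/- If A, B ∈ ℂ^{n×n} are Hermitian with A ⪰ B ⪰ 0 (Loewner order), then per(A) ≥ per(B). -/
open scoped Matrix

/-!
`n! · per M = ∑_{σ,τ} ∏ᵢ M (σ i) (τ i)` is the entry sum of the principal submatrix, on the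
permutations, of the tensor power `M^{⊗n}` (a matrix indexed by `Fin n → Fin n`).
Tensor products of positive semidefinite matrices are positive semidefinite (factor each
as `Cᴴ C`), so expanding `A = (A - B) + B` multilinearly gives `B^{⊗n} ⪯ A^{⊗n}`; and a
principal submatrix of a positive semidefinite matrix has a nonnegative entry sum.
-/

namespace Matrix

variable {ι m n p R : Type*} [Fintype ι]

def piKronecker [CommMonoid R] (D : ι → Matrix m n R) : Matrix (ι → m) (ι → n) R :=
  of fun f g => ∏ i, D i (f i) (g i)

@[simp]
lemma piKronecker_apply [CommMonoid R] (D : ι → Matrix m n R) (f : ι → m) (g : ι → n) :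
    piKronecker D f g = ∏ i, D i (f i) (g i) := rfl

lemma conjTranspose_piKronecker [CommMonoid R] [StarMul R] (D : ι → Matrix m n R) :
    (piKronecker D)ᴴ = piKronecker fun i => (D i)ᴴ := by
  ext f g
  simp [star_prod]

lemma piKronecker_mul [DecidableEq ι] [CommSemiring R] [Fintype n] (C : ι → Matrix m n R)
    (D : ι → Matrix n p R) : piKronecker C * piKronecker D = piKronecker fun i => C i * D i := by
  ext f g
  simp only [mul_apply, piKronecker_apply, ← Finset.prod_mul_distrib]
  exact (Fintype.prod_sum fun i k => C i (f i) k * D i k (g i)).symm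

lemma piKronecker_add [DecidableEq ι] [CommSemiring R] (P Q : ι → Matrix m n R) :
    piKronecker (P + Q) = ∑ b : ι → Bool, piKronecker fun i => bif b i then P i else Q i := by
  ext f g
  calc ∏ i, (P i + Q i) (f i) (g i)
      = ∏ i, ∑ b : Bool, (bif b then P i else Q i) (f i) (g i) := by simp
    _ = _ := by
        rw [Fintype.prod_sum]
        simp [sum_apply]

lemma PosSemidef.sum_sum_apply_nonneg [Ring R] [PartialOrder R] [StarRing R] [Fintype n]
    {M : Matrix n n R} (hM : M.PosSemidef) : 0 ≤ ∑ i, ∑ j, M i j := by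
  simpa [dotProduct, mulVec, Finset.mul_sum] using hM.dotProduct_mulVec_nonneg 1

section Loewner

open scoped ComplexOrder MatrixOrder

variable {𝕜 : Type*} [RCLike 𝕜] [Fintype m]

lemma PosSemidef.piKronecker {D : ι → Matrix m m 𝕜} (hD : ∀ i, (D i).PosSemidef) :
    (piKronecker D).PosSemidef := by
  classical
  choose C hC using fun i =>
    CStarAlgebra.nonneg_iff_eq_star_mul_self.mp (hD i).nonneg
  obtain rfl : D = fun i => star (C i) * C i := funext hC
  simp_rw [star_eq_conjTranspose, ← piKronecker_mul, ← conjTranspose_piKronecker]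
  exact posSemidef_conjTranspose_mul_self _

lemma piKronecker_mono {D E : ι → Matrix m m 𝕜} (hE : ∀ i, 0 ≤ E i) (hED : ∀ i, E i ≤ D i) :
    piKronecker E ≤ piKronecker D := by
  classical
  rw [← sub_add_cancel D E, piKronecker_add]
  -- every term is positive semidefinite, and the one with `b ≡ false` is `piKronecker E`
  refine Finset.single_le_sum (f := fun b : ι → Bool =>
      piKronecker fun i => bif b i then (D - E) i else E i)
    (fun b _ => (PosSemidef.piKronecker fun i => ?_).nonneg) (Finset.mem_univ fun _ => false)
  cases b i
  · exact nonneg_iff_posSemidef.mp (hE i)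
  · exact hED i

end Loewner

end Matrix

open Matrix

lemma sum_prod_apply_eq_perm {n : ℕ} (M : Matrix (Fin n) (Fin n) ℂ) (σ : Equiv.Perm (Fin n)) :
    ∑ τ : Equiv.Perm (Fin n), ∏ i, M (σ i) (τ i) = perm M := by
  rw [perm, ← Equiv.sum_comp (Equiv.mulRight σ)]
  exact Finset.sum_congr rfl fun τ _ => Equiv.prod_comp σ fun j => M j (τ j)

lemma factorial_mul_perm_eq_sum_piKronecker {n : ℕ} (M : Matrix (Fin n) (Fin n) ℂ) :
    (n.factorial : ℂ) * perm M =
      ∑ σ : Equiv.Perm (Fin n), ∑ τ : Equiv.Perm (Fin n), piKronecker (fun _ => M) σ τ := by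
  simp [sum_prod_apply_eq_perm, Fintype.card_perm]

open ComplexOrder in
theorem perm_monotone (n : ℕ) (A B : Matrix (Fin n) (Fin n) ℂ)
    (hB : B.PosSemidef) (hAB : (A - B).PosSemidef) :
    perm B ≤ perm A := by
  have hmono : ((piKronecker fun _ : Fin n => A) - piKronecker fun _ => B).PosSemidef := by
    open scoped MatrixOrder in
    exact piKronecker_mono (fun _ => hB.nonneg) fun _ => hAB
  have hsum :=
    (hmono.submatrix fun σ : Equiv.Perm (Fin n) => (σ : Fin n → Fin n)).sum_sum_apply_nonneg
  simp only [submatrix_apply, Matrix.sub_apply, Finset.sum_sub_distrib,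
    ← factorial_mul_perm_eq_sum_piKronecker, sub_nonneg] at hsum
  exact le_of_mul_le_mul_left hsum (Nat.cast_pos.mpr n.factorial_pos)
end

section
/- Let A ∈ ℂ^{n×n} be Hermitian PSD with A_{ii} > 0 for all i. Then the infimum rel(A) = inf{ Π_i D_{ii} : D diagonal, D ⪰ A } is attained by some diagonal matrix D* ⪰ A. -/
open scoped Matrix ComplexOrder

def relSet {n : ℕ} (A : Matrix (Fin n) (Fin n) ℂ) : Set ℝ :=
  {t | ∃ d : Fin n → ℝ,
    (Matrix.diagonal (fun i => (d i : ℂ)) - A).PosSemidef ∧ ∏ i, d i = t}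

/-!
The feasible set `{d | diag d ⪰ A}` is closed, nonempty (any constant `d ≥ λ_max(A)` lies in it)
and bounded below coordinatewise by the positive vector `(A i i).re`, since `diag d - A ⪰ 0` has
nonnegative diagonal. A lower bound `a > 0` turns every sublevel set of `∏ i, d i` into a subset
of the compact box `a i ≤ d i ≤ t / ∏_{j ≠ i} a j`, so the continuous product attains its minimum.
-/

open Filter Finset

section ProdMin

variable {ι : Type*} [Fintype ι]

lemma mul_prod_erase_le_prod {a d : ι → ℝ} (ha : 0 ≤ a) (had : a ≤ d) [DecidableEq ι] (i : ι) :
    d i * ∏ j ∈ univ.erase i, a j ≤ ∏ j, d j := by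
  rw [← mul_prod_erase univ d (mem_univ i)]
  exact mul_le_mul_of_nonneg_left (prod_le_prod (fun j _ => ha j) fun j _ => had j)
    ((ha i).trans (had i))

theorem exists_isMinOn_prod_of_isClosed {C : Set (ι → ℝ)} (hC : IsClosed C) (hCne : C.Nonempty)
    {a : ι → ℝ} (ha : ∀ i, 0 < a i) (haC : ∀ d ∈ C, a ≤ d) :
    ∃ d ∈ C, IsMinOn (fun d => ∏ i, d i) C d := by
  classical
  obtain ⟨d₀, hd₀⟩ := hCne
  set t₀ := ∏ i, d₀ i
  refine (continuous_finsetProd _ fun i _ => continuous_apply i).continuousOn.exists_isMinOn'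
    hC hd₀ ?_
  rw [eventually_inf_principal, eventually_iff, mem_cocompact']
  refine ⟨Set.univ.pi fun i => Set.Icc (a i) (t₀ / ∏ j ∈ univ.erase i, a j),
    isCompact_univ_pi fun i => isCompact_Icc, fun d hd i _ => ?_⟩
  simp only [Set.mem_compl_iff, Set.mem_ofPred_eq, Classical.not_imp, not_le] at hd
  obtain ⟨hdC, hlt⟩ := hd
  have had := haC d hdC
  refine ⟨had i, (le_div_iff₀ (prod_pos fun j _ => ha j)).2 ?_⟩
  exact (mul_prod_erase_le_prod (fun j => (ha j).le) had i).trans hlt.le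

end ProdMin

namespace Matrix

variable {n : Type*} [DecidableEq n]

lemma PosSemidef.re_diag_le_of_diagonal_sub {A : Matrix n n ℂ} {d : n → ℝ}
    (h : (diagonal (fun i => (d i : ℂ)) - A).PosSemidef) (i : n) : (A i i).re ≤ d i := by
  simpa [Complex.le_def] using (h.diag_nonneg (i := i)).1

variable [Fintype n]

lemma IsHermitian.exists_posSemidef_diagonal_const_sub {A : Matrix n n ℂ} (hA : A.IsHermitian) :
    ∃ r : ℝ, (diagonal (fun _ => (r : ℂ)) - A).PosSemidef := by
  open scoped MatrixOrder in
  have hspec := hA.spectrum_real_eq_range_eigenvalues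
  obtain ⟨r, hr⟩ := hspec ▸ (Set.finite_range hA.eigenvalues).bddAbove
  have hle : A ≤ algebraMap ℝ _ r :=
    le_algebraMap_of_spectrum_le (fun x hx => hr (hspec ▸ hx)) hA.isSelfAdjoint
  rw [le_iff, algebraMap_eq_diagonal] at hle
  exact ⟨r, hle⟩

lemma IsHermitian.isClosed_setOf_posSemidef_diagonal_sub {A : Matrix n n ℂ} (hA : A.IsHermitian) :
    IsClosed {d : n → ℝ | (diagonal (fun i => (d i : ℂ)) - A).PosSemidef} := by
  have hherm (d : n → ℝ) : (diagonal (fun i => (d i : ℂ)) - A).IsHermitian :=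
    (isHermitian_diagonal_of_self_adjoint _ (funext fun i => Complex.conj_ofReal (d i))).sub hA
  simp only [posSemidef_iff_dotProduct_mulVec, hherm, true_and, Set.ofPred_forall]
  exact isClosed_iInter fun x => isClosed_le continuous_const (by fun_prop)

end Matrix

theorem rel_attained (n : ℕ) (A : Matrix (Fin n) (Fin n) ℂ) (hA : A.PosSemidef)
    (hdiag : ∀ i, 0 < (A i i).re) :
    ∃ d : Fin n → ℝ, (Matrix.diagonal (fun i => (d i : ℂ)) - A).PosSemidef ∧
      ∏ i, d i = sInf (relSet A) := by
  obtain ⟨r, hr⟩ := hA.isHermitian.exists_posSemidef_diagonal_const_sub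
  obtain ⟨d, hd, hmin⟩ := exists_isMinOn_prod_of_isClosed
    hA.isHermitian.isClosed_setOf_posSemidef_diagonal_sub ⟨_, hr⟩ hdiag
    fun d hd i => hd.re_diag_le_of_diagonal_sub i
  have hleast : IsLeast (relSet A) (∏ i, d i) := ⟨⟨d, hd, rfl⟩, by
    rintro _ ⟨d', hd', rfl⟩
    exact hmin hd'⟩
  exact ⟨d, hd, hleast.csInf_eq.symm⟩
end

section
/- Let A ∈ ℂ^{n×n} be Hermitian PSD such that the identity I minimizes per(D) = Π_i D_{ii} over diagonal matrices D ⪰ A. Then there exists a Hermitian PSD matrix B ∈ ℂ^{n×n} with B_{ii} = 1 for all i (a correlation matrix) such that AB = B. -/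
/-!
Write `N = 1 - A ⪰ 0`. The diagonals of the trace-one PSD matrices `B` with `N B = 0` form a
compact convex set `H` in the hyperplane `∑ hᵢ = 1`. If the barycentre `(1/n, …, 1/n)` lies in
`H`, then `n • B` is the required correlation matrix. Otherwise a separating functional gives
`c` with `∑ cᵢ < 0` and `∑ cᵢ |yᵢ|² > 0` for every nonzero `y ∈ ker N`. Since `N` is positive
off its kernel, compactness of the unit sphere then gives `t > 0` with `N + t • diag c ⪰ 0`,
that is `D = diag (1 + t c) ⪰ A`. As `A ⪰ 0`, all `1 + t cᵢ ≥ 0`, so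
`per D = ∏ (1 + t cᵢ) ≤ exp (t ∑ cᵢ) < 1`, contradicting the minimality of `I`.
-/

open scoped Matrix ComplexOrder
open Matrix

theorem IsCompact.exists_pos_forall_nonneg_add_mul {X : Type*} [TopologicalSpace X] {S : Set X}
    (hS : IsCompact S) {Q R : X → ℝ} (hQ : Continuous Q) (hR : Continuous R)
    (hQS : ∀ x ∈ S, 0 ≤ Q x) (hRS : ∀ x ∈ S, Q x = 0 → 0 < R x) :
    ∃ t : ℝ, 0 < t ∧ ∀ x ∈ S, 0 ≤ Q x + t * R x := by
  obtain ⟨m, hm, hmQ⟩ := (hS.inter_right (isClosed_le hR continuous_const)).exists_forall_le'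
    hQ.continuousOn fun x ⟨hx, hRx⟩ => (hQS x hx).lt_of_ne' fun h => (hRS x hx h).not_ge hRx
  obtain ⟨L, hL⟩ := (hS.image hR).bddBelow
  have hL' : ∀ x ∈ S, -|L| ≤ R x := fun x hx => (neg_abs_le L).trans (hL ⟨x, hx, rfl⟩)
  set t := m / (|L| + 1)
  have htL : t * |L| ≤ m := by
    rw [div_mul_eq_mul_div, div_le_iff₀ (by positivity)]
    nlinarith [abs_nonneg L]
  refine ⟨t, by positivity, fun x hx => ?_⟩
  rcases le_or_gt (R x) 0 with hRx | hRx
  · nlinarith [hmQ x ⟨hx, hRx⟩, mul_le_mul_of_nonneg_left (hL' x hx) (by positivity : 0 ≤ t)]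
  · exact add_nonneg (hQS x hx) (by positivity)

section Fintype

variable {ι : Type*} [Fintype ι]

theorem exists_dotProduct_neg_and_pos_of_notMem {H : Set (ι → ℝ)} (hconv : Convex ℝ H)
    (hcpt : IsCompact H) (hH : ∀ h ∈ H, ∑ i, h i = 1) {p : ι → ℝ} (hp : ∑ i, p i = 1)
    (hpH : p ∉ H) : ∃ c : ι → ℝ, c ⬝ᵥ p < 0 ∧ ∀ h ∈ H, 0 < c ⬝ᵥ h := by
  classical
  obtain ⟨f, u, v, hfH, huv, hfp⟩ := geometric_hahn_banach_compact_closed hconv hcpt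
    (convex_singleton p) isClosed_singleton (Set.disjoint_singleton_right.mpr hpH)
  -- on the hyperplane `∑ xᵢ = 1` the constant `v` is the linear form `x ↦ v * ∑ xᵢ`
  set c : ι → ℝ := fun i => v - f (Pi.single i 1)
  have hc : ∀ x, c ⬝ᵥ x = v * ∑ i, x i - f x := fun x => by
    have hsingle : ∀ i, f (Pi.single i (x i)) = x i * f (Pi.single i 1) := fun i => by
      rw [← smul_eq_mul, ← map_smul, ← Pi.single_smul, smul_eq_mul, mul_one]
    conv_rhs => rw [← Finset.univ_sum_single x]
    simp [c, dotProduct, mul_sub, Finset.mul_sum, hsingle, mul_comm]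
  refine ⟨c, ?_, fun h hh => ?_⟩
  · rw [hc, hp, mul_one]
    linarith [hfp p rfl]
  · rw [hc, hH h hh, mul_one]
    linarith [hfH h hh]

theorem prod_one_add_mul_lt_one {c : ι → ℝ} {t : ℝ} (ht : 0 < t) (hc : ∑ i, c i < 0)
    (hnonneg : ∀ i, 0 ≤ 1 + t * c i) : ∏ i, (1 + t * c i) < 1 :=
  calc ∏ i, (1 + t * c i)
      ≤ ∏ i, Real.exp (t * c i) := Finset.prod_le_prod (fun i _ => hnonneg i)
        fun i _ => by linarith [Real.add_one_le_exp (t * c i)]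
    _ = Real.exp (t * ∑ i, c i) := by rw [← Real.exp_sum, Finset.mul_sum]
    _ < 1 := Real.exp_lt_one_iff.mpr (mul_neg_of_pos_of_neg ht hc)

end Fintype

namespace Matrix

variable {ι 𝕜 : Type*} [RCLike 𝕜]

theorem PosSemidef.norm_apply_sq_le {B : Matrix ι ι 𝕜} (hB : B.PosSemidef) (i j : ι) :
    ‖B i j‖ ^ 2 ≤ RCLike.re (B i i) * RCLike.re (B j j) := by
  have hdet := (hB.submatrix ![i, j]).det_nonneg
  rw [det_fin_two] at hdet
  simp only [submatrix_apply, cons_val_zero, cons_val_one] at hdet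
  rw [← hB.1.coe_re_apply_self i, ← hB.1.coe_re_apply_self j, ← hB.1.apply i j, RCLike.star_def,
    RCLike.conj_mul, ← RCLike.ofReal_pow, ← RCLike.ofReal_mul, ← RCLike.ofReal_sub,
    RCLike.ofReal_nonneg] at hdet
  rw [← hB.1.apply i j, norm_star]
  linarith

theorem nonneg_of_posSemidef_diagonal_sub [DecidableEq ι] {A : Matrix ι ι 𝕜} {d : ι → ℝ}
    (hA : A.PosSemidef) (h : (diagonal (fun i => (d i : 𝕜)) - A).PosSemidef) : ∀ i, 0 ≤ d i := by
  simpa using h.add hA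

variable [Fintype ι]

theorem PosSemidef.re_apply_self_le_re_trace {B : Matrix ι ι 𝕜} (hB : B.PosSemidef) (i : ι) :
    RCLike.re (B i i) ≤ RCLike.re B.trace := by
  rw [trace, map_sum]
  exact Finset.single_le_sum (f := fun k => RCLike.re (B k k))
    (fun k _ => (RCLike.nonneg_iff.mp hB.diag_nonneg).1) (Finset.mem_univ i)

theorem PosSemidef.norm_apply_le_re_trace {B : Matrix ι ι 𝕜} (hB : B.PosSemidef) (i j : ι) :
    ‖B i j‖ ≤ RCLike.re B.trace := by
  have hi := hB.re_apply_self_le_re_trace i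
  have hj := hB.re_apply_self_le_re_trace j
  have hi0 := (RCLike.nonneg_iff.mp (hB.diag_nonneg (i := i))).1
  have hj0 := (RCLike.nonneg_iff.mp (hB.diag_nonneg (i := j))).1
  nlinarith [hB.norm_apply_sq_le i j, norm_nonneg (B i j)]

theorem isClosed_setOf_posSemidef : IsClosed {B : Matrix ι ι 𝕜 | B.PosSemidef} := by
  have : {B : Matrix ι ι 𝕜 | B.PosSemidef} =
      {B | Bᴴ = B} ∩ ⋂ x : ι → 𝕜, {B | 0 ≤ star x ⬝ᵥ B *ᵥ x} := by
    ext B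
    simp [posSemidef_iff_dotProduct_mulVec, IsHermitian]
  rw [this]
  exact (isClosed_eq (by fun_prop) continuous_id).inter
    (isClosed_iInter fun x => isClosed_le continuous_const (by fun_prop))

theorem isCompact_setOf_posSemidef_trace_eq_one :
    IsCompact {B : Matrix ι ι 𝕜 | B.PosSemidef ∧ B.trace = 1} := by
  refine (isCompact_univ_pi fun _ => isCompact_univ_pi fun _ =>
    isCompact_closedBall (0 : 𝕜) 1).of_isClosed_subset
    (isClosed_setOf_posSemidef.inter (isClosed_eq (by fun_prop) continuous_const)) ?_
  rintro B ⟨hB, htr⟩ i - j -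
  simpa [htr] using hB.norm_apply_le_re_trace i j

theorem re_dotProduct_mulVec_smul (P : Matrix ι ι 𝕜) (a : 𝕜) (y : ι → 𝕜) :
    RCLike.re (star (a • y) ⬝ᵥ P *ᵥ (a • y)) = ‖a‖ ^ 2 * RCLike.re (star y ⬝ᵥ P *ᵥ y) := by
  rw [star_smul, smul_dotProduct, mulVec_smul, dotProduct_smul, smul_smul, smul_eq_mul,
    RCLike.star_def, RCLike.conj_mul, ← RCLike.ofReal_pow, RCLike.re_ofReal_mul]

theorem re_star_dotProduct_diagonal_mulVec [DecidableEq ι] (c : ι → ℝ) (y : ι → 𝕜) :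
    RCLike.re (star y ⬝ᵥ diagonal (fun i => (c i : 𝕜)) *ᵥ y) = c ⬝ᵥ fun i => ‖y i‖ ^ 2 := by
  simp [dotProduct, mulVec_diagonal, mul_left_comm _ (c _ : 𝕜), RCLike.star_def, RCLike.conj_mul]

theorem IsHermitian.posSemidef_of_forall_mem_sphere {P : Matrix ι ι 𝕜} (hP : P.IsHermitian)
    (h : ∀ y ∈ Metric.sphere (0 : ι → 𝕜) 1, 0 ≤ RCLike.re (star y ⬝ᵥ P *ᵥ y)) :
    P.PosSemidef := by
  refine .of_dotProduct_mulVec_nonneg hP fun y => RCLike.nonneg_iff.mpr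
    ⟨?_, hP.im_star_dotProduct_mulVec_self y⟩
  rcases eq_or_ne y 0 with rfl | hy
  · simp
  have hunit : ((‖y‖⁻¹ : ℝ) : 𝕜) • y ∈ Metric.sphere (0 : ι → 𝕜) 1 := by
    simp [norm_smul, hy]
  have := h _ hunit
  rw [re_dotProduct_mulVec_smul] at this
  exact nonneg_of_mul_nonneg_right (by rwa [mul_comm] at this) (by simp [hy])

theorem PosSemidef.exists_pos_posSemidef_add_smul {N M : Matrix ι ι 𝕜}
    (hN : N.PosSemidef) (hM : M.IsHermitian)
    (hker : ∀ y, y ≠ 0 → N *ᵥ y = 0 → 0 < RCLike.re (star y ⬝ᵥ M *ᵥ y)) :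
    ∃ t : ℝ, 0 < t ∧ (N + (t : 𝕜) • M).PosSemidef := by
  have hquad : ∀ (t : ℝ) y, RCLike.re (star y ⬝ᵥ (N + (t : 𝕜) • M) *ᵥ y) =
      RCLike.re (star y ⬝ᵥ N *ᵥ y) + t * RCLike.re (star y ⬝ᵥ M *ᵥ y) := fun t y => by
    rw [add_mulVec, dotProduct_add, smul_mulVec, dotProduct_smul, smul_eq_mul, map_add,
      RCLike.re_ofReal_mul]
  obtain ⟨t, ht, hnonneg⟩ := (isCompact_sphere (0 : ι → 𝕜) 1).exists_pos_forall_nonneg_add_mul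
    (Q := fun y => RCLike.re (star y ⬝ᵥ N *ᵥ y)) (R := fun y => RCLike.re (star y ⬝ᵥ M *ᵥ y))
    (by fun_prop) (by fun_prop) (fun y _ => hN.re_dotProduct_nonneg y) fun y hy hQy => by
      refine hker y (by rintro rfl; simp at hy) ((hN.dotProduct_mulVec_zero_iff y).mp ?_)
      exact RCLike.ext (by simpa using hQy) (by simpa using hN.1.im_star_dotProduct_mulVec_self y)
  refine ⟨t, ht, (hN.1.add (hM.smul (RCLike.conj_ofReal t))).posSemidef_of_forall_mem_sphere
    fun y hy => ?_⟩
  rw [hquad]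
  exact hnonneg y hy

def kernelStateDiagonals (N : Matrix ι ι 𝕜) : Set (ι → ℝ) :=
  (fun B i => RCLike.re (B i i)) '' ({B | B.PosSemidef ∧ B.trace = 1} ∩ {B | N * B = 0})

variable {N : Matrix ι ι 𝕜}

theorem convex_kernelStateDiagonals : Convex ℝ (kernelStateDiagonals N) := by
  rintro _ ⟨B₁, ⟨⟨hB₁, htr₁⟩, hN₁ : N * B₁ = 0⟩, rfl⟩ _ ⟨B₂, ⟨⟨hB₂, htr₂⟩, hN₂ : N * B₂ = 0⟩, rfl⟩
    a b ha hb hab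
  refine ⟨a • B₁ + b • B₂, ⟨⟨(hB₁.smul ha).add (hB₂.smul hb), ?_⟩, ?_⟩, ?_⟩
  · rw [trace_add, trace_smul, trace_smul, htr₁, htr₂, ← add_smul, hab, one_smul]
  · show N * (a • B₁ + b • B₂) = 0
    simp [mul_add, hN₁, hN₂]
  · ext i
    simp [RCLike.smul_re]

theorem isCompact_kernelStateDiagonals : IsCompact (kernelStateDiagonals N) :=
  (isCompact_setOf_posSemidef_trace_eq_one.inter_right
    (isClosed_eq (by fun_prop) continuous_const)).image (by fun_prop)

theorem sum_eq_one_of_mem_kernelStateDiagonals {h : ι → ℝ} (hh : h ∈ kernelStateDiagonals N) :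
    ∑ i, h i = 1 := by
  obtain ⟨B, ⟨⟨-, htr⟩, -⟩, rfl⟩ := hh
  simpa [trace] using congrArg RCLike.re htr

theorem inv_smul_normSq_mem_kernelStateDiagonals {y : ι → 𝕜} (hy : y ≠ 0) (hNy : N *ᵥ y = 0) :
    (∑ j, ‖y j‖ ^ 2)⁻¹ • (fun i => ‖y i‖ ^ 2) ∈ kernelStateDiagonals N := by
  have hs : 0 < ∑ j, ‖y j‖ ^ 2 := by
    obtain ⟨i, hi⟩ := Function.ne_iff.mp hy
    exact Finset.sum_pos' (fun j _ => by positivity) ⟨i, Finset.mem_univ i, by positivity⟩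
  have hdiag : ∀ i, vecMulVec y (star y) i i = ((‖y i‖ ^ 2 : ℝ) : 𝕜) := fun i => by
    simp [vecMulVec_apply, RCLike.star_def, RCLike.mul_conj]
  refine ⟨(∑ j, ‖y j‖ ^ 2)⁻¹ • vecMulVec y (star y),
    ⟨⟨(posSemidef_vecMulVec_self_star y).smul (inv_nonneg.mpr hs.le), ?_⟩, ?_⟩, ?_⟩
  · rw [trace_smul]
    simp only [trace, diag_apply, hdiag]
    rw [← RCLike.ofReal_sum, RCLike.real_smul_ofReal, ← RCLike.ofReal_mul, inv_mul_cancel₀ hs.ne',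
      RCLike.ofReal_one]
  · show N * (_ • _) = 0
    simp [mul_vecMulVec, hNy]
  · ext i
    simp [hdiag, RCLike.smul_re]

theorem exists_posSemidef_diag_eq_one_of_mem
    (h : (fun _ => (Fintype.card ι : ℝ)⁻¹) ∈ kernelStateDiagonals N) :
    ∃ B : Matrix ι ι 𝕜, B.PosSemidef ∧ (∀ i, B i i = 1) ∧ N * B = 0 := by
  obtain ⟨B, ⟨⟨hB, -⟩, hNB : N * B = 0⟩, hdiag⟩ := h
  refine ⟨(Fintype.card ι : ℝ) • B, hB.smul (by positivity), fun i => ?_, by simp [hNB]⟩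
  have : Nonempty ι := ⟨i⟩
  have hcard : (Fintype.card ι : ℝ) ≠ 0 := Nat.cast_ne_zero.mpr Fintype.card_ne_zero
  have hii : RCLike.re (B i i) = (Fintype.card ι : ℝ)⁻¹ := congrFun hdiag i
  rw [Matrix.smul_apply, ← hB.1.coe_re_apply_self, hii, RCLike.real_smul_ofReal,
    ← RCLike.ofReal_mul, mul_inv_cancel₀ hcard, RCLike.ofReal_one]

theorem exists_sum_neg_posSemidef_add_smul_diagonal_of_notMem [Nonempty ι] [DecidableEq ι]
    (hN : N.PosSemidef) (h : (fun _ => (Fintype.card ι : ℝ)⁻¹) ∉ kernelStateDiagonals N) :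
    ∃ c : ι → ℝ, ∑ i, c i < 0 ∧
      ∃ t : ℝ, 0 < t ∧ (N + (t : 𝕜) • diagonal fun i => (c i : 𝕜)).PosSemidef := by
  have hcard : (Fintype.card ι : ℝ) ≠ 0 := Nat.cast_ne_zero.mpr Fintype.card_ne_zero
  obtain ⟨c, hcp, hcH⟩ := exists_dotProduct_neg_and_pos_of_notMem convex_kernelStateDiagonals
    isCompact_kernelStateDiagonals (fun _ => sum_eq_one_of_mem_kernelStateDiagonals)
    (by simp [hcard]) h
  refine ⟨c, ?_, hN.exists_pos_posSemidef_add_smul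
    (isHermitian_diagonal_of_self_adjoint _ (funext fun i => RCLike.conj_ofReal (c i)))
    fun y hy hNy => ?_⟩
  · rw [dotProduct_comm, dotProduct, ← Finset.mul_sum] at hcp
    exact neg_of_mul_neg_right hcp (by positivity)
  · have := hcH _ (inv_smul_normSq_mem_kernelStateDiagonals hy hNy)
    rw [dotProduct_smul, smul_eq_mul] at this
    rw [re_star_dotProduct_diagonal_mulVec]
    exact pos_of_mul_pos_right this (by positivity)

end Matrix

theorem exists_correlation_certificate (n : ℕ) (A : Matrix (Fin n) (Fin n) ℂ)
    (hA : A.PosSemidef)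
    (hI : ((1 : Matrix (Fin n) (Fin n) ℂ) - A).PosSemidef)
    (hopt : ∀ d : Fin n → ℝ,
      (Matrix.diagonal (fun i => (d i : ℂ)) - A).PosSemidef → 1 ≤ ∏ i, d i) :
    ∃ B : Matrix (Fin n) (Fin n) ℂ,
      B.PosSemidef ∧ (∀ i, B i i = 1) ∧ A * B = B := by
  rcases isEmpty_or_nonempty (Fin n) with _ | _
  · exact ⟨0, .zero, fun i => isEmptyElim i, Subsingleton.elim _ _⟩
  by_cases hmem : (fun _ => (Fintype.card (Fin n) : ℝ)⁻¹) ∈ kernelStateDiagonals (1 - A)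
  · obtain ⟨B, hB, hdiag, hNB⟩ := exists_posSemidef_diag_eq_one_of_mem hmem
    exact ⟨B, hB, hdiag, by rwa [sub_mul, one_mul, sub_eq_zero, eq_comm] at hNB⟩
  obtain ⟨c, hc, t, ht, hpsd⟩ := exists_sum_neg_posSemidef_add_smul_diagonal_of_notMem hI hmem
  have hD : (diagonal (fun i => ((1 + t * c i : ℝ) : ℂ)) - A).PosSemidef := by
    have : diagonal (fun i => ((1 + t * c i : ℝ) : ℂ)) - A =
        1 - A + (t : ℂ) • diagonal fun i => (c i : ℂ) := by
      ext i j
      rcases eq_or_ne i j with rfl | hij <;> simp [*, one_apply, sub_add_eq_add_sub]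
    rw [this]
    exact hpsd
  exact ((hopt _ hD).not_gt
    (prod_one_add_mul_lt_one ht hc (nonneg_of_posSemidef_diagonal_sub hA hD))).elim
end

section
/- Let U ∈ ℂ^{d×n} have rank d and suppose U†U has all diagonal entries equal to 1. Let A = U†(UU†)^{-1}U. Then rel(A) := inf{ Π_i D_{ii} : D diagonal, D ⪰ A } = 1. -/
/-!
`Uᴴ * (U * Uᴴ)⁻¹ * U` is the orthogonal projection `P` onto the row space of `U`, so `D = 1`
is admissible. Conversely, let `D = diagonal v` with `D - P ⪰ 0`. Then `v i ≥ P i i > 0`, and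
writing `P - P * D⁻¹ * P` as a sum of congruences of `P` and `D - P` gives `P * D⁻¹ * P ⪯ P`.
Pairing this with `B = Uᴴ * U ⪰ 0`, which satisfies `P * B = B`, yields
`∑ i, B i i / v i = tr (D⁻¹ * B) ≤ tr B`, i.e. `∑ i, (v i)⁻¹ ≤ n`, and AM-GM turns this into
`∏ i, v i ≥ 1`.
-/

open scoped Matrix ComplexOrder

theorem Real.one_le_prod_of_sum_inv_le_card {ι : Type*} [Fintype ι] {v : ι → ℝ}
    (hv : ∀ i, 0 < v i) (h : ∑ i, (v i)⁻¹ ≤ Fintype.card ι) : 1 ≤ ∏ i, v i := by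
  rcases isEmpty_or_nonempty ι with hι | hι
  · simp
  have hcard : (0 : ℝ) < Fintype.card ι := by exact_mod_cast Fintype.card_pos
  have hamgm := Real.geom_mean_le_arith_mean Finset.univ (fun _ => 1) (fun i => (v i)⁻¹)
    (fun _ _ => zero_le_one) (by simpa using hcard) (fun i _ => (inv_pos.mpr (hv i)).le)
  simp only [Real.rpow_one, one_mul, Finset.sum_const, Finset.card_univ, nsmul_eq_mul, mul_one,
    Finset.prod_inv_distrib] at hamgm
  have hprod : 0 < ∏ i, v i := Finset.prod_pos fun i _ => hv i
  have hinv : (∏ i, v i)⁻¹ ≤ 1 := by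
    have := hamgm.trans ((div_le_one hcard).mpr h)
    rwa [Real.rpow_inv_le_iff_of_pos (inv_pos.mpr hprod).le zero_le_one hcard, Real.one_rpow]
      at this
  exact (inv_le_one₀ hprod).mp hinv

theorem Matrix.isUnit_of_rank_eq_card {n K : Type*} [Fintype n] [DecidableEq n] [Field K]
    {M : Matrix n n K} (h : M.rank = Fintype.card n) : IsUnit M := by
  have hrange : LinearMap.range M.mulVecLin = ⊤ :=
    Submodule.eq_top_of_finrank_eq (h.trans (Module.finrank_fintype_fun_eq_card K).symm)
  exact mulVec_surjective_iff_isUnit.mp (LinearMap.range_eq_top.mp hrange)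

namespace Matrix

variable {m n 𝕜 : Type*} [Fintype m] [Fintype n] [RCLike 𝕜]

omit [Fintype n] in
theorem conjTranspose_mul_mul_apply_self (B : Matrix m n 𝕜) (M : Matrix m m 𝕜) (i : n) :
    (Bᴴ * M * B) i i = star (Bᵀ i) ⬝ᵥ (M *ᵥ Bᵀ i) := by
  simp only [mul_apply, dotProduct, mulVec, conjTranspose_apply, transpose_apply, Pi.star_apply,
    Finset.sum_mul, Finset.mul_sum, mul_assoc]
  exact Finset.sum_comm

omit [Fintype n] in
theorem PosDef.conjTranspose_mul_mul_apply_pos [DecidableEq m] {G : Matrix m m 𝕜} (hG : G.PosDef)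
    {B : Matrix m n 𝕜} {i : n} (hi : (Bᴴ * B) i i ≠ 0) : 0 < (Bᴴ * G * B) i i := by
  rw [conjTranspose_mul_mul_apply_self]
  refine hG.dotProduct_mulVec_pos fun h => hi ?_
  simpa [h] using conjTranspose_mul_mul_apply_self B 1 i

theorem IsHermitian.posSemidef_one_sub [DecidableEq n] {P : Matrix n n 𝕜} (hP : P.IsHermitian)
    (hPP : P * P = P) : (1 - P).PosSemidef := by
  have h : 1 - P = (1 - P)ᴴ * (1 - P) := by
    rw [conjTranspose_sub, conjTranspose_one, hP.eq]; noncomm_ring; rw [hPP]; abel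
  rw [h]
  exact posSemidef_conjTranspose_mul_self _

theorem PosSemidef.sub_mul_inv_mul [DecidableEq n] {A D : Matrix n n 𝕜} (hA : A.PosSemidef)
    (hDA : (D - A).PosSemidef) (hD : IsUnit D) : (A - A * D⁻¹ * A).PosSemidef := by
  have hDh : D.IsHermitian := by simpa using hDA.isHermitian.add hA.isHermitian
  have hY : (D⁻¹ * A)ᴴ = A * D⁻¹ := by
    rw [conjTranspose_mul, conjTranspose_nonsing_inv, hA.isHermitian.eq, hDh.eq]
  have hDD : A * D⁻¹ * (D - A) * (D⁻¹ * A) = A * D⁻¹ * A - A * D⁻¹ * A * (D⁻¹ * A) := by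
    rw [Matrix.mul_sub, Matrix.sub_mul,
      nonsing_inv_mul_cancel_right _ _ ((isUnit_iff_isUnit_det D).mp hD)]
    simp only [Matrix.mul_assoc]
  have h : A - A * D⁻¹ * A =
      (1 - D⁻¹ * A)ᴴ * A * (1 - D⁻¹ * A) + (D⁻¹ * A)ᴴ * (D - A) * (D⁻¹ * A) := by
    rw [conjTranspose_sub, conjTranspose_one, hY, hDD]
    noncomm_ring
  rw [h]
  exact (hA.conjTranspose_mul_mul_same _).add (hDA.conjTranspose_mul_mul_same _)

open scoped MatrixOrder in
theorem PosSemidef.trace_mul_nonneg {P Q : Matrix n n 𝕜} (hP : P.PosSemidef)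
    (hQ : Q.PosSemidef) : 0 ≤ (P * Q).trace := by
  classical
  obtain ⟨C, rfl⟩ := CStarAlgebra.nonneg_iff_eq_star_mul_self.mp hQ.nonneg
  rw [← Matrix.mul_assoc, Matrix.trace_mul_cycle]
  exact (hP.mul_mul_conjTranspose_same C).trace_nonneg

theorem PosSemidef.trace_inv_mul_le_trace [DecidableEq n] {P D B : Matrix n n 𝕜}
    (hP : P.PosSemidef) (hDP : (D - P).PosSemidef) (hD : IsUnit D) (hB : B.PosSemidef)
    (hPB : P * B = B) : (D⁻¹ * B).trace ≤ B.trace := by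
  have hBP : B * P = B := by
    simpa [hB.isHermitian.eq, hP.isHermitian.eq] using congrArg (·ᴴ) hPB
  have h := (hP.sub_mul_inv_mul hDP hD).trace_mul_nonneg hB
  have hcycle : (P * D⁻¹ * P * B).trace = (D⁻¹ * B).trace := by
    rw [Matrix.mul_assoc, hPB, Matrix.trace_mul_cycle, hBP, Matrix.trace_mul_comm]
  rwa [Matrix.sub_mul, trace_sub, hPB, hcycle, sub_nonneg] at h

section RowSpaceProjection

variable [DecidableEq m]

/-- A projection only when `U * Uᴴ` is invertible. -/
noncomputable def rowSpaceProjection (U : Matrix m n 𝕜) : Matrix n n 𝕜 := Uᴴ * (U * Uᴴ)⁻¹ * U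

theorem posSemidef_rowSpaceProjection (U : Matrix m n 𝕜) : (rowSpaceProjection U).PosSemidef :=
  (posSemidef_self_mul_conjTranspose U).inv.conjTranspose_mul_mul_same U

variable {U : Matrix m n 𝕜} (hU : IsUnit (U * Uᴴ))
include hU

theorem mul_rowSpaceProjection : U * rowSpaceProjection U = U := by
  rw [rowSpaceProjection, ← Matrix.mul_assoc, ← Matrix.mul_assoc,
    mul_nonsing_inv _ ((isUnit_iff_isUnit_det _).mp hU), Matrix.one_mul]

theorem rowSpaceProjection_mul_conjTranspose_mul_self :
    rowSpaceProjection U * (Uᴴ * U) = Uᴴ * U := by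
  rw [rowSpaceProjection, Matrix.mul_assoc (Uᴴ * _), ← Matrix.mul_assoc U,
    ← Matrix.mul_assoc, nonsing_inv_mul_cancel_right _ _ ((isUnit_iff_isUnit_det _).mp hU)]

theorem rowSpaceProjection_mul_self :
    rowSpaceProjection U * rowSpaceProjection U = rowSpaceProjection U := by
  nth_rw 1 [rowSpaceProjection]
  rw [Matrix.mul_assoc, mul_rowSpaceProjection hU, rowSpaceProjection]

theorem rowSpaceProjection_apply_pos [DecidableEq n] {i : n} (hi : (Uᴴ * U) i i ≠ 0) :
    0 < rowSpaceProjection U i i :=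
  ((posSemidef_self_mul_conjTranspose U).posDef_iff_isUnit.mpr hU).inv
    |>.conjTranspose_mul_mul_apply_pos hi

variable [DecidableEq n] (hdiag : ∀ i, (Uᴴ * U) i i = 1) {v : n → ℝ}
  (hv : (diagonal (fun i => (v i : 𝕜)) - rowSpaceProjection U).PosSemidef)
include hdiag hv

theorem pos_of_posSemidef_diagonal_sub_rowSpaceProjection (i : n) : 0 < v i := by
  have hPi := rowSpaceProjection_apply_pos hU (i := i) (by simp [hdiag])
  have hvi := hv.diag_nonneg (i := i)
  rw [sub_apply, diagonal_apply_eq, sub_nonneg] at hvi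
  exact_mod_cast hPi.trans_le hvi

theorem sum_inv_le_card_of_posSemidef_diagonal_sub_rowSpaceProjection :
    ∑ i, (v i)⁻¹ ≤ Fintype.card n := by
  have hvpos := pos_of_posSemidef_diagonal_sub_rowSpaceProjection hU hdiag hv
  have hv0 (i : n) : (v i : 𝕜) ≠ 0 := by exact_mod_cast (hvpos i).ne'
  have hDinv : (diagonal fun i => (v i : 𝕜))⁻¹ = diagonal fun i => ((v i : 𝕜))⁻¹ := by
    refine inv_eq_left_inv ?_
    rw [diagonal_mul_diagonal, ← diagonal_one]
    congr with i
    exact inv_mul_cancel₀ (hv0 i)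
  have htr := (posSemidef_rowSpaceProjection U).trace_inv_mul_le_trace hv
    (isUnit_diagonal.mpr (Pi.isUnit_iff.mpr fun i => (hv0 i).isUnit))
    (posSemidef_conjTranspose_mul_self U) (rowSpaceProjection_mul_conjTranspose_mul_self hU)
  simp only [hDinv, trace, diag, diagonal_mul, hdiag, mul_one, Finset.sum_const,
    Finset.card_univ, nsmul_eq_mul] at htr
  exact_mod_cast htr

end RowSpaceProjection

end Matrix

open Matrix

theorem rel_projection_eq_one (d n : ℕ) (U : Matrix (Fin d) (Fin n) ℂ)
    (hU : U.rank = d) (hdiag : ∀ i, (Uᴴ * U) i i = 1) :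
    sInf (relSet (Uᴴ * (U * Uᴴ)⁻¹ * U)) = 1 := by
  have hunit : IsUnit (U * Uᴴ) :=
    isUnit_of_rank_eq_card (by rw [rank_self_mul_conjTranspose, hU, Fintype.card_fin])
  change sInf (relSet (rowSpaceProjection U)) = 1
  refine IsLeast.csInf_eq ⟨⟨fun _ => 1, ?_, by simp⟩, ?_⟩
  · simpa using (posSemidef_rowSpaceProjection U).isHermitian.posSemidef_one_sub
      (rowSpaceProjection_mul_self hunit)
  rintro t ⟨v, hv, rfl⟩
  exact Real.one_le_prod_of_sum_inv_le_card
    (pos_of_posSemidef_diagonal_sub_rowSpaceProjection hunit hdiag hv)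
    (sum_inv_le_card_of_posSemidef_diagonal_sub_rowSpaceProjection hunit hdiag hv)
end
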